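/- Let x, u : ℝ² → ℝ³ and let θ be a point at which x and u are differentiable. Write a_α = ∂x/∂θ^α(θ) and u,_α = ∂u/∂θ^α(θ), assume a₁ × a₂ ≠ 0, and set a₃ = (a₁ × a₂)/‖a₁ × a₂‖. For ε ∈ ℝ define the unit normal of the deformed surface n(ε) = ( (a₁ + ε u,₁) × (a₂ + ε u,₂) ) / ‖ (a₁ + ε u,₁) × (a₂ + ε u,₂) ‖. Then ε ↦ n(ε) is differentiable at ε = 0 with derivative w/‖a₁ × a₂‖ − a₃ (a₃ · w)/‖a₁ × a₂‖, where w = u,₁ × a₂ + a₁ × u,₂. -/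

import Mathlib

open Matrix

/-- The Euclidean norm of a vector in `ℝ³` (represented as `Fin 3 → ℝ`). -/
noncomputable def euclNorm3 (v : Fin 3 → ℝ) : ℝ :=
  ‖(EuclideanSpace.equiv (Fin 3) ℝ).symm v‖

/-! The deformed normal is `c ε / ‖c ε‖` with `c ε = (a₁ + ε u₁) × (a₂ + ε u₂)`, whose derivative at
`0` is `w` by the product rule for the bilinear cross product. Differentiating `v ↦ v / ‖v‖` along a
curve through `v ≠ 0` gives `‖v‖⁻¹` times the part of the velocity orthogonal to the unit vector
`v / ‖v‖`, which at `v = a₁ × a₂` is the stated derivative. -/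

open scoped InnerProductSpace

theorem HasDerivAt.cross {𝕜 : Type*} [NontriviallyNormedField 𝕜] [CompleteSpace 𝕜]
    {f g : 𝕜 → Fin 3 → 𝕜} {f' g' : Fin 3 → 𝕜} {t : 𝕜} (hf : HasDerivAt f f' t) (hg : HasDerivAt g g' t) :
    HasDerivAt (fun s => f s ⨯₃ g s) (f' ⨯₃ g t + f t ⨯₃ g') t := by
  have := (crossProduct : (Fin 3 → 𝕜) →ₗ[𝕜] _ →ₗ[𝕜] _).toContinuousBilinearMap
    |>.hasFDerivAt_of_bilinear hf.hasFDerivAt hg.hasFDerivAt |>.hasDerivAt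
  simpa [add_comm] using this

section InnerProductSpace

variable {E : Type*} [NormedAddCommGroup E] [InnerProductSpace ℝ E]
  {c : ℝ → E} {c' : E} {t : ℝ}

theorem HasDerivAt.norm (hc : HasDerivAt c c' t) (h0 : c t ≠ 0) :
    HasDerivAt (fun s => ‖c s‖) (⟪c t, c'⟫_ℝ / ‖c t‖) t := by
  have h := hc.norm_sq.sqrt (by simpa using h0)
  simp only [Real.sqrt_sq (norm_nonneg _)] at h
  convert h using 1
  have : ‖c t‖ ≠ 0 := norm_ne_zero_iff.mpr h0
  field_simp

theorem HasDerivAt.inv_norm_smul (hc : HasDerivAt c c' t) (h0 : c t ≠ 0) :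
    HasDerivAt (fun s => ‖c s‖⁻¹ • c s)
      (‖c t‖⁻¹ • (c' - ⟪‖c t‖⁻¹ • c t, c'⟫_ℝ • (‖c t‖⁻¹ • c t))) t := by
  have hn : ‖c t‖ ≠ 0 := norm_ne_zero_iff.mpr h0
  convert ((hc.norm h0).fun_inv hn).fun_smul hc using 1
  rw [real_inner_smul_left]
  match_scalars <;> field_simp

end InnerProductSpace

theorem EuclideanSpace.inner_equiv_symm {ι : Type*} [Fintype ι] (a b : ι → ℝ) :
    ⟪(EuclideanSpace.equiv ι ℝ).symm a, (EuclideanSpace.equiv ι ℝ).symm b⟫_ℝ = a ⬝ᵥ b := by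
  rw [dotProduct_comm]
  rfl

theorem HasDerivAt.euclNorm3_inv_smul {c : ℝ → Fin 3 → ℝ} {c' : Fin 3 → ℝ} {t : ℝ}
    (hc : HasDerivAt c c' t) (h0 : c t ≠ 0) :
    HasDerivAt (fun s => (euclNorm3 (c s))⁻¹ • c s)
      ((euclNorm3 (c t))⁻¹ • c' -
        (((euclNorm3 (c t))⁻¹ • c t) ⬝ᵥ c' / euclNorm3 (c t)) • ((euclNorm3 (c t))⁻¹ • c t)) t := by
  have hE := ((EuclideanSpace.equiv (Fin 3) ℝ).symm.hasFDerivAt.comp_hasDerivAt t hc).inv_norm_smul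
    (by simpa using h0)
  have h2 := (EuclideanSpace.equiv (Fin 3) ℝ).hasFDerivAt.comp_hasDerivAt t hE
  simp only [Function.comp_def, map_sub, map_smul, ContinuousLinearEquiv.coe_coe,
    ContinuousLinearEquiv.apply_symm_apply, real_inner_smul_left,
    EuclideanSpace.inner_equiv_symm] at h2
  unfold euclNorm3
  refine h2.congr_deriv ?_
  rw [smul_dotProduct, smul_eq_mul]
  match_scalars <;> ring

theorem deformed_unit_normal_linearisation_general
    (a₁ a₂ u₁ u₂ a₃ : Fin 3 → ℝ)
    (hcross : a₁ ⨯₃ a₂ ≠ 0)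
    (ha₃ : a₃ = (euclNorm3 (a₁ ⨯₃ a₂))⁻¹ • (a₁ ⨯₃ a₂))
    (nrm : ℝ → Fin 3 → ℝ)
    (hnrm : ∀ ε : ℝ, nrm ε =
      (euclNorm3 ((a₁ + ε • u₁) ⨯₃ (a₂ + ε • u₂)))⁻¹ • ((a₁ + ε • u₁) ⨯₃ (a₂ + ε • u₂))) :
    HasDerivAt nrm
      ((euclNorm3 (a₁ ⨯₃ a₂))⁻¹ • (u₁ ⨯₃ a₂ + a₁ ⨯₃ u₂) -
        ((a₃ ⬝ᵥ (u₁ ⨯₃ a₂ + a₁ ⨯₃ u₂)) / euclNorm3 (a₁ ⨯₃ a₂)) • a₃)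
      0 := by
  have hline : ∀ a v : Fin 3 → ℝ, HasDerivAt (fun ε : ℝ => a + ε • v) v 0 := fun a v => by
    simpa using ((hasDerivAt_id (0 : ℝ)).smul_const v).const_add a
  have hcross_deriv := (hline a₁ u₁).cross (hline a₂ u₂)
  simp only [zero_smul, add_zero] at hcross_deriv
  rw [funext hnrm, ha₃]
  simpa using hcross_deriv.euclNorm3_inv_smul (by simpa using hcross)

/-- **Linearisation of the deformed unit normal.**
Let `x u : ℝ² → ℝ³` be differentiable at `θ`, with `a_α = ∂x/∂θ^α(θ)`,
`u,_α = ∂u/∂θ^α(θ)`, `a₁ × a₂ ≠ 0` and `a₃ = (a₁ × a₂)/‖a₁ × a₂‖`.  For `ε ∈ ℝ` the unit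
normal of the deformed surface is
`n(ε) = ((a₁ + ε u,₁) × (a₂ + ε u,₂)) / ‖(a₁ + ε u,₁) × (a₂ + ε u,₂)‖`.
Then `ε ↦ n(ε)` is differentiable at `ε = 0` with derivative
`w/‖a₁ × a₂‖ − a₃ (a₃ · w)/‖a₁ × a₂‖`, where `w = u,₁ × a₂ + a₁ × u,₂`. -/
theorem deformed_unit_normal_linearisation
    (x u : (Fin 2 → ℝ) → (Fin 3 → ℝ)) (θ : Fin 2 → ℝ)
    (hx : DifferentiableAt ℝ x θ) (hu : DifferentiableAt ℝ u θ)
    (a₁ a₂ u₁ u₂ a₃ : Fin 3 → ℝ)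
    (ha₁ : a₁ = fderiv ℝ x θ (Pi.single (0 : Fin 2) (1 : ℝ)))
    (ha₂ : a₂ = fderiv ℝ x θ (Pi.single (1 : Fin 2) (1 : ℝ)))
    (hu₁ : u₁ = fderiv ℝ u θ (Pi.single (0 : Fin 2) (1 : ℝ)))
    (hu₂ : u₂ = fderiv ℝ u θ (Pi.single (1 : Fin 2) (1 : ℝ)))
    (hcross : a₁ ⨯₃ a₂ ≠ 0)
    (ha₃ : a₃ = (euclNorm3 (a₁ ⨯₃ a₂))⁻¹ • (a₁ ⨯₃ a₂))
    (nrm : ℝ → Fin 3 → ℝ)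
    (hnrm : ∀ ε : ℝ, nrm ε =
      (euclNorm3 ((a₁ + ε • u₁) ⨯₃ (a₂ + ε • u₂)))⁻¹ • ((a₁ + ε • u₁) ⨯₃ (a₂ + ε • u₂))) :
    HasDerivAt nrm
      ((euclNorm3 (a₁ ⨯₃ a₂))⁻¹ • (u₁ ⨯₃ a₂ + a₁ ⨯₃ u₂) -
        ((a₃ ⬝ᵥ (u₁ ⨯₃ a₂ + a₁ ⨯₃ u₂)) / euclNorm3 (a₁ ⨯₃ a₂)) • a₃)
      0 :=
  deformed_unit_normal_linearisation_general a₁ a₂ u₁ u₂ a₃ hcross ha₃ nrm hnrm
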